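/- Let M be a graded multiplication R-module and N a proper graded submodule of M. Then N is a graded quasi-semiprime submodule of M if and only if for every graded ideal I of R and every k ∈ ℤ⁺ with IᵏM ⊆ N, one has IM ⊆ N. -/

import Mathlib

/-! Since `IM ⊆ N ↔ I ⊆ (N :_R M)`, the condition only concerns the colon ideal `P = (N :_R M)`,
which is graded because `N` is. For a proper graded ideal `P`, being graded semiprime is
equivalent to `Iᵏ ⊆ P → I ⊆ P` for graded `I`: with `s = 1` semiprimeness puts every homogeneous
component of an element of `I` into `P`; conversely `rⁿs ∈ P` gives `(rs)ⁿ ∈ P`, and the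
principal ideal `(rs)` is graded. -/

open DirectSum

section Defs

variable {G : Type*} [AddGroup G] [DecidableEq G]
variable {R : Type*} [CommRing R] {M : Type*} [AddCommGroup M] [Module R M]

/-- An ideal is graded if it contains all homogeneous components of its elements. -/
def IsGradedIdeal (𝒜 : G → AddSubgroup R) [GradedRing 𝒜] (I : Ideal R) : Prop :=
  ∀ r ∈ I, ∀ g : G, (DirectSum.decompose 𝒜 r g : R) ∈ I

/-- A submodule is graded if it contains all homogeneous components of its elements. -/
def IsGradedSubmodule (ℳ : G → AddSubgroup M) [DirectSum.Decomposition ℳ]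
    (N : Submodule R M) : Prop :=
  ∀ m ∈ N, ∀ g : G, (DirectSum.decompose ℳ m g : M) ∈ N

/-- A graded semiprime ideal: proper, graded, and r^n*s ∈ I implies r*s ∈ I for homogeneous r,s. -/
def IsGradedSemiprimeIdeal (𝒜 : G → AddSubgroup R) [GradedRing 𝒜] (I : Ideal R) : Prop :=
  I ≠ ⊤ ∧ IsGradedIdeal 𝒜 I ∧
    ∀ r s : R, SetLike.IsHomogeneousElem 𝒜 r → SetLike.IsHomogeneousElem 𝒜 s →
      ∀ n : ℕ, 0 < n → r ^ n * s ∈ I → r * s ∈ I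

/-- A graded prime ideal. -/
def IsGradedPrimeIdeal (𝒜 : G → AddSubgroup R) [GradedRing 𝒜] (I : Ideal R) : Prop :=
  I ≠ ⊤ ∧ IsGradedIdeal 𝒜 I ∧
    ∀ r s : R, SetLike.IsHomogeneousElem 𝒜 r → SetLike.IsHomogeneousElem 𝒜 s →
      r * s ∈ I → r ∈ I ∨ s ∈ I

/-- A graded primary ideal. -/
def IsGradedPrimaryIdeal (𝒜 : G → AddSubgroup R) [GradedRing 𝒜] (I : Ideal R) : Prop :=
  I ≠ ⊤ ∧ IsGradedIdeal 𝒜 I ∧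
    ∀ r s : R, SetLike.IsHomogeneousElem 𝒜 r → SetLike.IsHomogeneousElem 𝒜 s →
      r * s ∈ I → r ∈ I ∨ ∃ n : ℕ, 0 < n ∧ s ^ n ∈ I

/-- A graded maximal ideal: proper graded ideal maximal among proper graded ideals. -/
def IsGradedMaximalIdeal (𝒜 : G → AddSubgroup R) [GradedRing 𝒜] (I : Ideal R) : Prop :=
  I ≠ ⊤ ∧ IsGradedIdeal 𝒜 I ∧
    ∀ J : Ideal R, IsGradedIdeal 𝒜 J → I ≤ J → J ≠ ⊤ → J = I

/-- A graded semiprime submodule. -/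
def IsGradedSemiprimeSubmodule (𝒜 : G → AddSubgroup R) (ℳ : G → AddSubgroup M)
    [DirectSum.Decomposition ℳ] (N : Submodule R M) : Prop :=
  N ≠ ⊤ ∧ IsGradedSubmodule ℳ N ∧
    ∀ (r : R) (m : M), SetLike.IsHomogeneousElem 𝒜 r → SetLike.IsHomogeneousElem ℳ m →
      ∀ n : ℕ, 0 < n → r ^ n • m ∈ N → r • m ∈ N

/-- A graded quasi-semiprime submodule: proper graded submodule whose colon ideal
`(N :_R M)` is a graded semiprime ideal. -/
def IsGradedQuasiSemiprimeSubmodule (𝒜 : G → AddSubgroup R) [GradedRing 𝒜]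
    (ℳ : G → AddSubgroup M) [DirectSum.Decomposition ℳ] (N : Submodule R M) : Prop :=
  N ≠ ⊤ ∧ IsGradedSubmodule ℳ N ∧ IsGradedSemiprimeIdeal 𝒜 (N.colon ⊤)

/-- A graded multiplication module: every graded submodule N equals (N :_R M)M. -/
def IsGradedMultiplicationModule (𝒜 : G → AddSubgroup R) [GradedRing 𝒜]
    (ℳ : G → AddSubgroup M) [DirectSum.Decomposition ℳ] : Prop :=
  ∀ N : Submodule R M, IsGradedSubmodule ℳ N → N = (N.colon ⊤) • (⊤ : Submodule R M)

end Defs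

variable {G : Type*} [AddGroup G] [DecidableEq G]
variable {R : Type*} [CommRing R] {M : Type*} [AddCommGroup M] [Module R M]
variable (𝒜 : G → AddSubgroup R) [GradedRing 𝒜]
variable (ℳ : G → AddSubgroup M) [DirectSum.Decomposition ℳ] [SetLike.GradedSMul 𝒜 ℳ]

section GradedIdeal

theorem isGradedIdeal_iff_isHomogeneous (I : Ideal R) : IsGradedIdeal 𝒜 I ↔ I.IsHomogeneous 𝒜 :=
  ⟨fun h g _ hr => h _ hr g, fun h _ hr g => h g hr⟩

theorem isGradedIdeal_span_singleton {x : R} (hx : SetLike.IsHomogeneousElem 𝒜 x) :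
    IsGradedIdeal 𝒜 (Ideal.span {x}) :=
  (isGradedIdeal_iff_isHomogeneous 𝒜 _).2 <|
    Ideal.homogeneous_span 𝒜 {x} fun _ hy => (Set.mem_singleton_iff.1 hy) ▸ hx

variable {𝒜}

theorem IsGradedSemiprimeIdeal.mem_of_pow_mem {P : Ideal R} (hP : IsGradedSemiprimeIdeal 𝒜 P)
    {r : R} (hr : SetLike.IsHomogeneousElem 𝒜 r) {n : ℕ} (hn : 0 < n) (hrn : r ^ n ∈ P) :
    r ∈ P := by
  simpa using hP.2.2 r 1 hr (SetLike.isHomogeneousElem_one 𝒜) n hn (by simpa using hrn)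

theorem IsGradedSemiprimeIdeal.le_of_pow_le {P I : Ideal R} (hP : IsGradedSemiprimeIdeal 𝒜 P)
    (hI : IsGradedIdeal 𝒜 I) {k : ℕ} (hk : 0 < k) (hIk : I ^ k ≤ P) : I ≤ P := by
  classical
  intro r hr
  rw [← sum_support_decompose 𝒜 r]
  exact Ideal.sum_mem _ fun g _ =>
    hP.mem_of_pow_mem ⟨g, SetLike.coe_mem _⟩ hk (hIk (Ideal.pow_mem_pow (hI r hr g) k))

theorem isGradedSemiprimeIdeal_iff {P : Ideal R} (hP : P ≠ ⊤) (hPg : IsGradedIdeal 𝒜 P) :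
    IsGradedSemiprimeIdeal 𝒜 P ↔
      ∀ I : Ideal R, IsGradedIdeal 𝒜 I → ∀ k : ℕ, 0 < k → I ^ k ≤ P → I ≤ P := by
  refine ⟨fun hsp I hI k hk => hsp.le_of_pow_le hI hk, fun h => ⟨hP, hPg, ?_⟩⟩
  intro r s hr hs n hn hrs
  have hpow : (r * s) ^ n ∈ P := by
    obtain ⟨m, rfl⟩ := Nat.exists_eq_add_one_of_ne_zero hn.ne'
    rw [show (r * s) ^ (m + 1) = r ^ (m + 1) * s * s ^ m by ring]
    exact P.mul_mem_right _ hrs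
  have hspan : Ideal.span {r * s} ^ n ≤ P := by
    rwa [Ideal.span_singleton_pow, Ideal.span_singleton_le_iff_mem]
  exact (Ideal.span_singleton_le_iff_mem P).1 <|
    h _ (isGradedIdeal_span_singleton 𝒜 (hr.mul hs)) n hn hspan

end GradedIdeal

section Colon

theorem Submodule.smul_top_le_iff_le_colon {I : Ideal R} {N : Submodule R M} :
    I • (⊤ : Submodule R M) ≤ N ↔ I ≤ N.colon ⊤ := by
  rw [Submodule.smul_le, SetLike.le_def]
  simp only [Submodule.mem_colon, Submodule.mem_top, Set.top_eq_univ, Set.mem_univ, true_implies]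

variable {ℳ}

theorem coe_decompose_smul_add_of_right_mem (r : R) {h : G} {m : M} (hm : m ∈ ℳ h) (g : G) :
    (decompose ℳ (r • m) (g + h) : M) = (decompose 𝒜 r g : R) • m := by
  induction r using Decomposition.inductionOn 𝒜 with
  | zero => simp
  | @homogeneous i a =>
    have hmem : (a : R) • m ∈ ℳ (i + h) := SetLike.GradedSMul.smul_mem a.2 hm
    by_cases hig : i = g
    · subst hig
      rw [decompose_of_mem_same ℳ hmem, decompose_coe, of_eq_same]
    · rw [decompose_of_mem_ne ℳ hmem fun hc => hig (add_right_cancel hc),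
        decompose_coe, of_eq_of_ne _ _ _ (Ne.symm hig)]
      simp
  | add x y hx hy =>
    simp only [add_smul, decompose_add, DirectSum.add_apply, AddSubgroup.coe_add, hx, hy]

theorem IsGradedSubmodule.isGradedIdeal_colon_top {N : Submodule R M}
    (hN : IsGradedSubmodule ℳ N) : IsGradedIdeal 𝒜 (N.colon ⊤) := by
  classical
  intro r hr g
  rw [Submodule.mem_colon] at hr ⊢
  intro m _
  rw [← sum_support_decompose ℳ m, Finset.smul_sum]
  refine Submodule.sum_mem _ fun h _ => ?_
  rw [← coe_decompose_smul_add_of_right_mem 𝒜 r (SetLike.coe_mem _) g]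
  exact hN _ (hr _ trivial) _

end Colon

theorem stmt4 (N : Submodule R M) (hNt : N ≠ ⊤)
    (hNg : IsGradedSubmodule ℳ N) :
    IsGradedQuasiSemiprimeSubmodule 𝒜 ℳ N ↔
      ∀ I : Ideal R, IsGradedIdeal 𝒜 I → ∀ k : ℕ, 0 < k →
        I ^ k • (⊤ : Submodule R M) ≤ N → I • (⊤ : Submodule R M) ≤ N := by
  have hcolon : N.colon ⊤ ≠ ⊤ := fun h =>
    hNt (eq_top_iff.2 fun m _ => (Submodule.colon_eq_top_iff_subset _).1 h (Set.mem_univ m))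
  simp only [IsGradedQuasiSemiprimeSubmodule, hNt, hNg, ne_eq, not_false_eq_true, true_and,
    Submodule.smul_top_le_iff_le_colon,
    isGradedSemiprimeIdeal_iff hcolon (hNg.isGradedIdeal_colon_top 𝒜)]
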